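/- The center of the braid group Br₃ is the infinite cyclic subgroup generated by u = (σ₁σ₂)³, and u has infinite order. -/

import Mathlib

/-- The braid relation σ₁σ₂σ₁ = σ₂σ₁σ₂ as a relator in the free group on two generators. -/
def braidRels : Set (FreeGroup (Fin 2)) :=
  {FreeGroup.of 0 * FreeGroup.of 1 * FreeGroup.of 0 *
    (FreeGroup.of 1 * FreeGroup.of 0 * FreeGroup.of 1)⁻¹}

/-- The braid group on three strands, presented as ⟨σ₁, σ₂ | σ₁σ₂σ₁ = σ₂σ₁σ₂⟩. -/
abbrev Br3 : Type := PresentedGroup braidRels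

/-- The first standard generator σ₁ of Br₃. -/
def σ₁ : Br3 := PresentedGroup.of 0

/-- The second standard generator σ₂ of Br₃. -/
def σ₂ : Br3 := PresentedGroup.of 1

/-
The Garside element `Δ = σ₁σ₂σ₁` satisfies `Δ² = (σ₁σ₂)³ = u` and conjugates `σ₁` and `σ₂` into
each other, so `u` is central. Modulo `⟨u⟩` the elements `Δ` and `σ₁σ₂` have orders `2` and `3`;
this gives a surjection `ψ : Br₃ → C₂ * C₃` and a map `φ : C₂ * C₃ → Br₃/⟨u⟩` with `φ ∘ ψ` the
quotient map. A free product of two nontrivial groups has trivial center (compare first letters of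
reduced words), so a central braid lies in `ker ψ ≤ ⟨u⟩`. Finally, `u` has infinite order because
its exponent sum is `6`.
-/

namespace Monoid.CoprodI

namespace NeWord

variable {ι : Type*} {M : ι → Type*} [∀ i, Monoid (M i)]

theorem head_ne_one {i j : ι} (w : NeWord M i j) : w.head ≠ 1 := by
  induction w with
  | singleton x hx => exact hx
  | append w₁ _ _ ih => exact ih

theorem exists_prod_eq {x : CoprodI M} (hx : x ≠ 1) : ∃ i j, ∃ w : NeWord M i j, w.prod = x := by
  classical
  obtain ⟨i, j, w, hw⟩ := of_word (Word.equiv x) fun h =>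
    hx ((Word.equiv.eq_symm_apply.2 h).trans Word.prod_empty)
  exact ⟨i, j, w, by rw [NeWord.prod, hw]; exact Word.equiv.symm_apply_apply x⟩

theorem fstIdx_eq_of_prod_eq {i j k l : ι} (w : NeWord M i j) (w' : NeWord M k l)
    (h : w.prod = w'.prod) : i = k := by
  classical
  have hw : w.toWord = w'.toWord := Word.equiv.symm.injective h
  have := congrArg (fun v : Word M => v.toList.head?) hw
  simp only [toWord, toList_head?, Option.some.injEq] at this
  exact congrArg Sigma.fst this

theorem prod_eq_of_head_or_exists_tail {i j : ι} (w : NeWord M i j) :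
    (i = j ∧ w.prod = of w.head) ∨
      ∃ k, k ≠ i ∧ ∃ t : NeWord M k j, w.prod = of w.head * t.prod := by
  induction w with
  | singleton x hx => exact .inl ⟨rfl, prod_singleton x hx⟩
  | append w₁ hne w₂ ih₁ _ =>
    right
    rcases ih₁ with ⟨rfl, h₁⟩ | ⟨k, hk, t, h₁⟩
    · exact ⟨_, hne.symm, w₂, by rw [append_prod, append_head, h₁]⟩
    · exact ⟨k, hk, t.append hne w₂, by rw [append_prod, append_prod, append_head, h₁, mul_assoc]⟩

end NeWord

theorem center_eq_bot {ι : Type*} {G : ι → Type*} [∀ i, Group (G i)]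
    (h : ∀ i, ∃ k, k ≠ i ∧ Nontrivial (G k)) : Subgroup.center (CoprodI G) = ⊥ := by
  refine (Subgroup.eq_bot_iff_forall _).2 fun z hz => by_contra fun hz1 => ?_
  rw [Subgroup.mem_center_iff] at hz
  obtain ⟨i, j, w, rfl⟩ := NeWord.exists_prod_eq hz1
  by_cases hij : i = j
  · subst hij
    obtain ⟨k, hki, hk⟩ := h i
    obtain ⟨g, hg⟩ := exists_ne (1 : G k)
    refine hki (NeWord.fstIdx_eq_of_prod_eq ((NeWord.singleton g hg).append hki w)
      (w.append hki.symm (NeWord.singleton g hg)) ?_)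
    rw [NeWord.append_prod, NeWord.append_prod, NeWord.prod_singleton, hz]
  · -- conjugating by its first letter rotates the cyclically reduced word `w`
    obtain ⟨hij', -⟩ | ⟨k, hki, t, ht⟩ := w.prod_eq_of_head_or_exists_tail
    · exact hij hij'
    have hcomm := hz (of w.head)
    rw [ht, mul_assoc] at hcomm
    refine hki (NeWord.fstIdx_eq_of_prod_eq
      (t.append (Ne.symm hij) (NeWord.singleton w.head w.head_ne_one)) w ?_)
    rw [NeWord.append_prod, NeWord.prod_singleton, ht, mul_left_cancel hcomm]

end Monoid.CoprodI

theorem Multiplicative.mem_zpowers_ofAdd_one {n : ℕ} (m : Multiplicative (ZMod n)) :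
    m ∈ Subgroup.zpowers (Multiplicative.ofAdd 1) := by
  obtain ⟨k, hk⟩ := ZMod.intCast_surjective (Multiplicative.toAdd m)
  exact Subgroup.mem_zpowers_iff.2 ⟨k, by rw [← ofAdd_zsmul, zsmul_one, hk]; rfl⟩

def ZMod.liftOfPowEqOne {Q : Type*} [Group Q] (n : ℕ) (q : Q) (hq : q ^ n = 1) :
    Multiplicative (ZMod n) →* Q :=
  AddMonoidHom.toMultiplicativeLeft <| ZMod.lift n
    ⟨zmultiplesHom (Additive Q) (Additive.ofMul q), by simp [← ofMul_pow, hq]⟩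

@[simp]
theorem ZMod.liftOfPowEqOne_ofAdd_one {Q : Type*} [Group Q] (n : ℕ) (q : Q) (hq : q ^ n = 1) :
    ZMod.liftOfPowEqOne n q hq (Multiplicative.ofAdd 1) = q := by
  rw [← Int.cast_one (R := ZMod n)]
  simp [ZMod.liftOfPowEqOne, -Int.cast_one]

theorem Subgroup.center_le_comap_center_of_surjective {G H : Type*} [Group G] [Group H]
    {f : G →* H} (hf : Function.Surjective f) :
    Subgroup.center G ≤ (Subgroup.center H).comap f := by
  intro z hz
  rw [Subgroup.mem_comap, Subgroup.mem_center_iff]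
  intro h
  obtain ⟨g, rfl⟩ := hf h
  rw [← map_mul, ← map_mul, Subgroup.mem_center_iff.1 hz g]

theorem Subgroup.normal_zpowers_of_mem_center {G : Type*} [Group G] {g : G}
    (hg : g ∈ Subgroup.center G) : (Subgroup.zpowers g).Normal :=
  ⟨fun n hn x => by
    rw [(Subgroup.mem_center_iff.1 (Subgroup.zpowers_le.2 hg hn) x), mul_inv_cancel_right]
    exact hn⟩

theorem PresentedGroup.mem_center_of_forall_commute_of {α : Type*} {rels : Set (FreeGroup α)}
    {z : PresentedGroup rels} (hz : ∀ a, Commute (PresentedGroup.of a) z) :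
    z ∈ Subgroup.center (PresentedGroup rels) := by
  rw [Subgroup.center_eq_iInf (PresentedGroup.closure_range_of rels)]
  simp only [Subgroup.mem_iInf, Set.forall_mem_range, Subgroup.mem_centralizer_singleton_iff]
  exact fun a => (hz a).eq.symm

namespace Br3

open Monoid

theorem braid_rel : σ₁ * σ₂ * σ₁ = σ₂ * σ₁ * σ₂ := by
  have h : PresentedGroup.mk braidRels (FreeGroup.of 0 * FreeGroup.of 1 * FreeGroup.of 0 *
      (FreeGroup.of 1 * FreeGroup.of 0 * FreeGroup.of 1)⁻¹) = 1 :=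
    (QuotientGroup.eq_one_iff _).2 (Subgroup.subset_normalClosure rfl)
  rw [map_mul, map_inv, mul_inv_eq_one] at h
  exact h

def Δ : Br3 := σ₁ * σ₂ * σ₁

theorem semiconjBy_Δ_σ₁ : SemiconjBy Δ σ₁ σ₂ := by
  rw [SemiconjBy, Δ]
  conv_lhs => rw [braid_rel]
  group

theorem semiconjBy_Δ_σ₂ : SemiconjBy Δ σ₂ σ₁ := by
  rw [SemiconjBy, Δ]
  conv_lhs => rw [mul_assoc, mul_assoc, ← mul_assoc σ₂, ← braid_rel]

theorem Δ_sq : Δ ^ 2 = (σ₁ * σ₂) ^ 3 := by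
  conv_lhs => rw [pow_two]; arg 2; rw [Δ, braid_rel]
  rw [Δ]; simp only [pow_succ, pow_zero, one_mul, mul_assoc]

theorem pow_three_mem_center : (σ₁ * σ₂) ^ 3 ∈ Subgroup.center Br3 := by
  refine PresentedGroup.mem_center_of_forall_commute_of fun a => ?_
  rw [← Δ_sq, pow_two]
  fin_cases a
  · exact (semiconjBy_Δ_σ₂.mul_left semiconjBy_Δ_σ₁).symm
  · exact (semiconjBy_Δ_σ₁.mul_left semiconjBy_Δ_σ₂).symm

abbrev C₂C₃Factor (c : Bool) : Type := Multiplicative (ZMod (cond c 3 2))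

abbrev C₂C₃ : Type := CoprodI C₂C₃Factor

def gen (c : Bool) : C₂C₃ := CoprodI.of (Multiplicative.ofAdd (1 : ZMod (cond c 3 2)))

theorem gen_pow_eq_one (c : Bool) : gen c ^ cond c 3 2 = 1 := by
  rw [gen, ← map_pow, ← ofAdd_nsmul, nsmul_one, ZMod.natCast_self, ofAdd_zero, map_one]

theorem center_C₂C₃ : Subgroup.center C₂C₃ = ⊥ := by
  refine CoprodI.center_eq_bot fun c => ⟨!c, by cases c <;> decide, ?_⟩
  cases c
  · exact inferInstanceAs (Nontrivial (Multiplicative (ZMod 3)))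
  · exact inferInstanceAs (Nontrivial (Multiplicative (ZMod 2)))

-- From `σ₁ = (σ₁σ₂)⁻¹Δ` and `σ₂ = Δ⁻¹(σ₁σ₂)²`: `ψ` sends `Δ ↦ gen false`, `σ₁σ₂ ↦ gen true`.
def ψ : Br3 →* C₂C₃ :=
  PresentedGroup.toGroup (f := ![(gen true)⁻¹ * gen false, (gen false)⁻¹ * gen true ^ 2]) <| by
    rintro _ rfl
    have h₂ : gen false * gen false = 1 := by rw [← pow_two]; exact gen_pow_eq_one false
    have h₃ : gen true ^ 3 = 1 := gen_pow_eq_one true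
    simp only [map_mul, map_inv, FreeGroup.lift_apply_of, Matrix.cons_val_zero,
      Matrix.cons_val_one]
    calc _ = gen false * (gen true ^ 3)⁻¹ * gen false := by group
      _ = 1 := by rw [h₃, inv_one, mul_one, h₂]

theorem ψ_σ₁ : ψ σ₁ = (gen true)⁻¹ * gen false := PresentedGroup.toGroup.of _

theorem ψ_σ₂ : ψ σ₂ = (gen false)⁻¹ * gen true ^ 2 := PresentedGroup.toGroup.of _

def genLift (c : Bool) : Br3 := cond c (σ₁ * σ₂) Δ

theorem ψ_genLift (c : Bool) : ψ (genLift c) = gen c := by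
  cases c
  · rw [genLift, cond_false, Δ, map_mul, map_mul, ψ_σ₁, ψ_σ₂]; group
  · rw [genLift, cond_true, map_mul, ψ_σ₁, ψ_σ₂]; group

theorem ψ_surjective : Function.Surjective ψ := by
  rw [← MonoidHom.range_eq_top, eq_top_iff]
  rintro x -
  induction x using CoprodI.induction_on with
  | one => exact one_mem _
  | of c m =>
    obtain ⟨k, rfl⟩ := Subgroup.mem_zpowers_iff.1 (Multiplicative.mem_zpowers_ofAdd_one m)
    rw [map_zpow]
    change gen c ^ k ∈ ψ.range
    rw [← ψ_genLift]
    exact zpow_mem (MonoidHom.mem_range.2 ⟨_, rfl⟩) k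
  | mul x y hx hy => exact mul_mem hx hy

instance : (Subgroup.zpowers ((σ₁ * σ₂) ^ 3)).Normal :=
  Subgroup.normal_zpowers_of_mem_center pow_three_mem_center

theorem genLift_pow (c : Bool) : genLift c ^ cond c 3 2 = (σ₁ * σ₂) ^ 3 := by
  cases c
  exacts [Δ_sq, rfl]

noncomputable def φ : C₂C₃ →* Br3 ⧸ Subgroup.zpowers ((σ₁ * σ₂) ^ 3) :=
  CoprodI.lift fun c => ZMod.liftOfPowEqOne (cond c 3 2) (genLift c : Br3 ⧸ _) <| by
    rw [← QuotientGroup.mk_pow, genLift_pow, QuotientGroup.eq_one_iff]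
    exact Subgroup.mem_zpowers _

theorem φ_gen (c : Bool) : φ (gen c) = (genLift c : Br3 ⧸ _) := by
  simp [φ, gen]

theorem φ_comp_ψ : φ.comp ψ = QuotientGroup.mk' _ := by
  refine PresentedGroup.ext fun a => ?_
  fin_cases a
  · change φ (ψ σ₁) = (σ₁ : Br3 ⧸ _)
    rw [ψ_σ₁, map_mul, map_inv, φ_gen, φ_gen, ← QuotientGroup.mk_inv, ← QuotientGroup.mk_mul]
    congr 1
    simp only [genLift, cond_true, cond_false, Δ]
    group
  · change φ (ψ σ₂) = (σ₂ : Br3 ⧸ _)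
    rw [ψ_σ₂, map_mul, map_inv, map_pow, φ_gen, φ_gen, ← QuotientGroup.mk_inv,
      ← QuotientGroup.mk_pow, ← QuotientGroup.mk_mul]
    congr 1
    simp only [genLift, cond_true, cond_false, Δ, pow_two]
    group

theorem center_le_zpowers : Subgroup.center Br3 ≤ Subgroup.zpowers ((σ₁ * σ₂) ^ 3) := by
  intro z hz
  have hψ : ψ z = 1 := by
    simpa [center_C₂C₃] using Subgroup.center_le_comap_center_of_surjective ψ_surjective hz
  rw [← QuotientGroup.eq_one_iff, ← QuotientGroup.mk'_apply, ← φ_comp_ψ, MonoidHom.comp_apply,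
    hψ, map_one]

def exponentSum : Br3 →* Multiplicative ℤ :=
  PresentedGroup.toGroup (f := fun _ => Multiplicative.ofAdd 1) <| by
    rintro _ rfl
    simp only [map_mul, map_inv, FreeGroup.lift_apply_of]
    group

theorem exponentSum_of (a : Fin 2) : exponentSum (PresentedGroup.of a) = Multiplicative.ofAdd 1 :=
  PresentedGroup.toGroup.of _

theorem not_isOfFinOrder_pow_three : ¬ IsOfFinOrder ((σ₁ * σ₂) ^ 3) := fun h => by
  have h6 := (isOfFinOrder_iff_eq_one _).1 (exponentSum.isOfFinOrder h)
  rw [map_pow, map_mul, σ₁, σ₂, exponentSum_of, exponentSum_of] at h6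
  exact absurd h6 (by decide)

end Br3

theorem stmt_7 :
    Subgroup.center Br3 = Subgroup.zpowers ((σ₁ * σ₂) ^ 3) ∧
      ¬ IsOfFinOrder ((σ₁ * σ₂) ^ 3) :=
  ⟨le_antisymm Br3.center_le_zpowers (Subgroup.zpowers_le.2 Br3.pow_three_mem_center),
    Br3.not_isOfFinOrder_pow_three⟩
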